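/- arXiv:1802.01418 — 3 statements merged into one kernel-verified Lean document; each statement's English description precedes it below -/
import Mathlib

section
/- A measure-preserving flow (Ω, μ, (g_t)_{t∈ℝ}) on a probability space is strongly mixing if and only if it is ergodic and exhibits Keplerian shear. -/
open MeasureTheory Filter
open scoped Topology

/-!
If the flow is ergodic, every invariant set has measure 0 or 1, so the conditional expectation
onto the invariant σ-algebra is the constant `∫ f` and the Keplerian-shear limit
`∫ φ * μ[f|I]` is exactly the mixing limit `(∫ φ) * ∫ f`. Conversely, applying mixing to the
indicator of an invariant set `A` gives `μ A = (μ A)²`, which is ergodicity.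
-/

namespace MeasureTheory

variable {Ω ι : Type*} {m m0 : MeasurableSpace Ω} {μ : Measure Ω}

theorem condExp_ae_eq_integral_of_measure_eq_zero_or_one [IsProbabilityMeasure μ]
    (hm : m ≤ m0) (hμm : ∀ s, MeasurableSet[m] s → μ s = 0 ∨ μ s = 1)
    {f : Ω → ℝ} (hf : Integrable f μ) :
    μ[f|m] =ᵐ[μ] fun _ => ∫ x, f x ∂μ := by
  refine (ae_eq_condExp_of_forall_setIntegral_eq hm hf
    (fun _ _ _ => (integrable_const _).integrableOn) (fun s hs _ => ?_)
    aestronglyMeasurable_const).symm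
  rcases hμm s hs with hs0 | hs1
  · simp [Measure.restrict_eq_zero.mpr hs0]
  · have hs_univ : s =ᵐ[μ] Set.univ :=
      (ae_eq_univ_iff_measure_eq (hm s hs).nullMeasurableSet).mpr (by simp [hs1])
    simp [setIntegral_congr_set hs_univ]

theorem integral_mul_condExp_of_measure_eq_zero_or_one [IsProbabilityMeasure μ]
    (hm : m ≤ m0) (hμm : ∀ s, MeasurableSet[m] s → μ s = 0 ∨ μ s = 1)
    {f : Ω → ℝ} (hf : Integrable f μ) (φ : Ω → ℝ) :
    ∫ x, φ x * μ[f|m] x ∂μ = (∫ x, φ x ∂μ) * ∫ x, f x ∂μ := by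
  refine (integral_congr_ae ?_).trans (integral_mul_const _ _)
  filter_upwards [condExp_ae_eq_integral_of_measure_eq_zero_or_one hm hμm hf] with x hx
  rw [hx]

theorem integral_indicator_one_mul_comp_of_preimage_ae_eq {A : Set Ω} (hA : MeasurableSet A)
    {T : Ω → Ω} (hT : T ⁻¹' A =ᵐ[μ] A) :
    ∫ x, A.indicator 1 x * A.indicator 1 (T x) ∂μ = μ.real A := by
  rw [← integral_indicator_one hA]
  refine integral_congr_ae ?_
  filter_upwards [indicator_ae_eq_of_ae_eq_set (f := (1 : Ω → ℝ)) hT] with x hx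
  change A.indicator 1 x * (T ⁻¹' A).indicator 1 x = _
  rw [hx]
  by_cases hxA : x ∈ A <;> simp [hxA]

theorem measure_eq_zero_or_one_of_tendsto_integral_indicator_mul [IsFiniteMeasure μ]
    {l : Filter ι} [l.NeBot] {g : ι → Ω → Ω} {A : Set Ω} (hA : MeasurableSet A)
    (hinv : ∀ t, g t ⁻¹' A =ᵐ[μ] A)
    (hmix : Tendsto (fun t => ∫ x, A.indicator 1 x * A.indicator 1 (g t x) ∂μ) l
      (𝓝 ((∫ x, A.indicator (1 : Ω → ℝ) x ∂μ) * ∫ x, A.indicator (1 : Ω → ℝ) x ∂μ))) :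
    μ A = 0 ∨ μ A = 1 := by
  simp only [integral_indicator_one_mul_comp_of_preimage_ae_eq hA (hinv _),
    integral_indicator_one hA] at hmix
  have hsq : μ.real A * μ.real A = μ.real A := tendsto_nhds_unique hmix tendsto_const_nhds
  rcases eq_or_ne (μ.real A) 0 with h0 | h0
  · exact Or.inl ((measureReal_eq_zero_iff).mp h0)
  · exact Or.inr ((ENNReal.toReal_eq_one_iff _).mp ((mul_eq_left₀ h0).mp hsq))

end MeasureTheory

theorem stmt4_general {Ω : Type*} [m0 : MeasurableSpace Ω] (μ : Measure Ω) [IsProbabilityMeasure μ]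
    (g : ℝ → Ω → Ω)
    (I : MeasurableSpace Ω) (hle : I ≤ m0)
    (hIdef : ∀ A : Set Ω, MeasurableSet[I] A ↔
      (MeasurableSet[m0] A ∧ ∀ t : ℝ, g t ⁻¹' A =ᵐ[μ] A)) :
    -- strong mixing
    (∀ f φ : Ω → ℝ, MemLp f 2 μ → MemLp φ 2 μ →
        Tendsto (fun t : ℝ => ∫ x, φ x * f (g t x) ∂μ) atTop
          (𝓝 ((∫ x, φ x ∂μ) * ∫ x, f x ∂μ)))
    ↔
    -- ergodicity ...
    ((∀ A : Set Ω, MeasurableSet[m0] A → (∀ t : ℝ, g t ⁻¹' A =ᵐ[μ] A) →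
        μ A = 0 ∨ μ A = 1)
      ∧
    -- ... and Keplerian shear
      (∀ f φ : Ω → ℝ, MemLp f 2 μ → MemLp φ 2 μ →
        Tendsto (fun t : ℝ => ∫ x, φ x * f (g t x) ∂μ) atTop
          (𝓝 (∫ x, φ x * (μ[f|I]) x ∂μ)))) := by
  have shear_limit_eq_mixing_limit
      (herg : ∀ A : Set Ω, MeasurableSet[m0] A → (∀ t : ℝ, g t ⁻¹' A =ᵐ[μ] A) →
        μ A = 0 ∨ μ A = 1)
      (f φ : Ω → ℝ) (hf : MemLp f 2 μ) :
      ∫ x, φ x * (μ[f|I]) x ∂μ = (∫ x, φ x ∂μ) * ∫ x, f x ∂μ :=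
    integral_mul_condExp_of_measure_eq_zero_or_one hle
      (fun s hs => herg s ((hIdef s).1 hs).1 ((hIdef s).1 hs).2) (hf.integrable one_le_two) φ
  constructor
  · intro hmix
    have herg : ∀ A : Set Ω, MeasurableSet[m0] A → (∀ t : ℝ, g t ⁻¹' A =ᵐ[μ] A) →
        μ A = 0 ∨ μ A = 1 := fun A hA hinv =>
      have hA2 : MemLp (A.indicator 1) 2 μ := memLp_indicator_const 2 hA 1 (.inr (by finiteness))
      measure_eq_zero_or_one_of_tendsto_integral_indicator_mul hA hinv (hmix _ _ hA2 hA2)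
    refine ⟨herg, fun f φ hf hφ => ?_⟩
    rw [shear_limit_eq_mixing_limit herg f φ hf]
    exact hmix f φ hf hφ
  · rintro ⟨herg, hshear⟩ f φ hf hφ
    rw [← shear_limit_eq_mixing_limit herg f φ hf]
    exact hshear f φ hf hφ

/-- A measure-preserving flow on a probability space is strongly mixing
if and only if it is ergodic and exhibits Keplerian shear. -/
theorem stmt4 {Ω : Type*} [m0 : MeasurableSpace Ω] (μ : Measure Ω) [IsProbabilityMeasure μ]
    (g : ℝ → Ω → Ω)
    (hmeas : ∀ t, Measurable (g t))
    (hmp : ∀ t, MeasurePreserving (g t) μ μ)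
    (hflow : ∀ s t, g (s + t) = g s ∘ g t) (h0 : g 0 = id)
    (I : MeasurableSpace Ω) (hle : I ≤ m0)
    (hIdef : ∀ A : Set Ω, MeasurableSet[I] A ↔
      (MeasurableSet[m0] A ∧ ∀ t : ℝ, g t ⁻¹' A =ᵐ[μ] A)) :
    -- strong mixing
    (∀ f φ : Ω → ℝ, MemLp f 2 μ → MemLp φ 2 μ →
        Tendsto (fun t : ℝ => ∫ x, φ x * f (g t x) ∂μ) atTop
          (𝓝 ((∫ x, φ x ∂μ) * ∫ x, f x ∂μ)))
    ↔
    -- ergodicity ...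
    ((∀ A : Set Ω, MeasurableSet[m0] A → (∀ t : ℝ, g t ⁻¹' A =ᵐ[μ] A) →
        μ A = 0 ∨ μ A = 1)
      ∧
    -- ... and Keplerian shear
      (∀ f φ : Ω → ℝ, MemLp f 2 μ → MemLp φ 2 μ →
        Tendsto (fun t : ℝ => ∫ x, φ x * f (g t x) ∂μ) atTop
          (𝓝 (∫ x, φ x * (μ[f|I]) x ∂μ)))) :=
  stmt4_general (m0 := m0) μ g I hle hIdef
end

section
/- Let T(x, y) = (x, y + v(x)) on M × ℤ_p^d as above, and suppose there exist a set A ⊆ M with ν(A) > 0, an index i, an integer N ≥ 0, and k ∈ {1, …, p−1} such that for all x ∈ A the N-th digit of the p-adic expansion of v_i(x) equals k. Let χ be a nontrivial character of ℤ/pℤ and f(x, y) = 1_A(x) · χ(N-th p-adic digit of y_i). Then f ∘ T^{n+p} = f ∘ Tⁿ for all n ≥ 0, and f ∘ Tⁿ(x,y) = χ(k)ⁿ f(x,y) on A × ℤ_p^d. -/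
open MeasureTheory Filter Set
open scoped ENNReal Topology

/-- The `N`-th digit of the `p`-adic expansion of `y ∈ ℤ_p`
(extracted from the approximation `y.appr (N+1) ≡ y [p^(N+1)]`). -/
noncomputable def padicDigit (p : ℕ) [Fact p.Prime] (N : ℕ) (y : PadicInt p) : ℕ :=
  y.appr (N + 1) / p ^ N % p

lemma padicDigit_add (p : ℕ) [hp : Fact p.Prime] (N : ℕ) (y : PadicInt p) (a : ℕ) (ℓ : PadicInt p) :
    ((padicDigit p N (y + ((a : PadicInt p) * (p : PadicInt p) ^ N + ℓ * (p : PadicInt p) ^ (N+1))) : ZMod p))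
      = (padicDigit p N y : ZMod p) + a := by
  have hppos : 0 < p ^ N := pow_pos hp.out.pos N
  set y' := y + ((a : PadicInt p) * (p : PadicInt p) ^ N + ℓ * (p : PadicInt p) ^ (N+1)) with hy'
  -- appr of y' ≡ appr y + a p^N  mod p^{N+1}
  have h1 : (y' : PadicInt p) - (y'.appr (N+1) : PadicInt p) ∈
      Ideal.span {(p : PadicInt p) ^ (N+1)} := PadicInt.appr_spec (N+1) y'
  have h2 : (y' : PadicInt p) - ((y.appr (N+1) + a * p ^ N : ℕ) : PadicInt p) ∈
      Ideal.span {(p : PadicInt p) ^ (N+1)} := by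
    have hy := PadicInt.appr_spec (N+1) y
    rw [Ideal.mem_span_singleton] at hy ⊢
    obtain ⟨c, hc⟩ := hy
    refine ⟨c + ℓ, ?_⟩
    push_cast
    rw [hy']
    linear_combination hc
  have hcong : ((y'.appr (N+1) : ZMod (p^(N+1)))) = ((y.appr (N+1) + a * p ^ N : ℕ) : ZMod (p^(N+1))) :=
    PadicInt.zmod_congr_of_sub_mem_span (N+1) y' _ _ h1 h2
  have hmod : y'.appr (N+1) % p^(N+1) = (y.appr (N+1) + a * p ^ N) % p^(N+1) :=
    (ZMod.natCast_eq_natCast_iff' _ _ _).mp hcong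
  have happr : y'.appr (N+1) = (y.appr (N+1) + a * p ^ N) % p^(N+1) := by
    rw [← hmod, Nat.mod_eq_of_lt (PadicInt.appr_lt _ _)]
  have hdig : padicDigit p N y' = (y.appr (N+1) / p ^ N + a) % p := by
    unfold padicDigit
    rw [happr, pow_succ, Nat.mod_mul_right_div_self,
      Nat.add_mul_div_right _ _ hppos, Nat.mod_mod_of_dvd _ dvd_rfl]
  rw [hdig]
  unfold padicDigit
  push_cast [ZMod.natCast_mod]
  ring

/-- Suppose on a set `A` of positive measure the `i`-th component of `v`
has the form `v_i(x) = k p^N + ℓ(x) p^{N+1}` with `1 ≤ k ≤ p − 1`. Let `χ` be a nontrivial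
additive character of `ℤ/pℤ`, and `f(x, y) = 1_A(x) χ((y_i)_N)`. Then `f ∘ T^{n+p} = f ∘ Tⁿ`
for all `n ≥ 0`, and `f ∘ Tⁿ = χ(k)ⁿ f` on `A × ℤ_pᵈ`. -/
theorem stmt14 (p : ℕ) [Fact p.Prime] (d : ℕ)
    {M : Type*} [MeasurableSpace M] (ν : Measure M) [IsProbabilityMeasure ν]
    (A : Set M) (hA : 0 < ν A)
    (i : Fin d) (N : ℕ) (k : ℕ) (hk1 : 1 ≤ k) (hk2 : k ≤ p - 1)
    (v : M → Fin d → PadicInt p)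
    (hv : ∀ x ∈ A, ∃ ℓ : PadicInt p,
      v x i = (k : PadicInt p) * (p : PadicInt p) ^ N + ℓ * (p : PadicInt p) ^ (N + 1))
    (χ : AddChar (ZMod p) ℂ) (hχ : ∃ a : ZMod p, χ a ≠ 1)
    (T : M × (Fin d → PadicInt p) → M × (Fin d → PadicInt p))
    (hT : ∀ z, T z = (z.1, z.2 + v z.1))
    (f : M × (Fin d → PadicInt p) → ℂ)
    (hf : ∀ z, f z = (Set.indicator A (fun _ => (1 : ℂ)) z.1) *
      χ ((padicDigit p N (z.2 i) : ZMod p))) :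
    (∀ n : ℕ, f ∘ T^[n + p] = f ∘ T^[n])
    ∧
    (∀ n : ℕ, ∀ x ∈ A, ∀ y : Fin d → PadicInt p,
      f (T^[n] (x, y)) = χ ((k : ZMod p)) ^ n * f (x, y)) := by
  -- iterate formula
  have hTn : ∀ (n : ℕ) (x : M) (y : Fin d → PadicInt p),
      T^[n] (x, y) = (x, y + n • v x) := by
    intro n x y
    induction n with
    | zero => simp
    | succ n ih =>
      rw [Function.iterate_succ_apply', ih, hT]
      simp only [Prod.mk.injEq, true_and]
      rw [succ_nsmul]
      abel
  -- digit formula on A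
  have hdigit : ∀ (n : ℕ) (x : M), x ∈ A → ∀ y : Fin d → PadicInt p,
      ((padicDigit p N ((y + n • v x) i) : ZMod p))
        = (padicDigit p N (y i) : ZMod p) + (n * k : ℕ) := by
    intro n x hx y
    obtain ⟨ℓ, hℓ⟩ := hv x hx
    have : (y + n • v x) i = y i
        + (((n * k : ℕ) : PadicInt p) * (p : PadicInt p) ^ N
          + ((n : PadicInt p) * ℓ) * (p : PadicInt p) ^ (N + 1)) := by
      simp only [Pi.add_apply, Pi.smul_apply, Pi.mul_apply, Pi.natCast_apply, nsmul_eq_mul, hℓ]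
      push_cast
      ring
    rw [this, padicDigit_add]
  -- value of f along the orbit
  have hval : ∀ (n : ℕ) (x : M) (y : Fin d → PadicInt p),
      f (T^[n] (x, y)) = (Set.indicator A (fun _ => (1 : ℂ)) x) *
        χ ((padicDigit p N ((y + n • v x) i) : ZMod p)) := by
    intro n x y
    rw [hTn, hf]
  constructor
  · intro n
    funext z
    obtain ⟨x, y⟩ := z
    simp only [Function.comp_apply]
    rw [hval, hval]
    by_cases hx : x ∈ A
    · congr 1
      rw [hdigit _ _ hx, hdigit _ _ hx]
      congr 1
      push_cast
      simp [add_mul, ZMod.natCast_self]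
    · simp [Set.indicator_of_notMem hx]
  · intro n x hx y
    rw [hval, hdigit _ _ hx, hf]
    simp only [AddChar.map_add_eq_mul]
    have : ((n * k : ℕ) : ZMod p) = n • (k : ZMod p) := by push_cast; ring
    rw [this, AddChar.map_nsmul_eq_pow]
    ring
end

section
/- Let (A, ν, T) be a probability-measure-preserving system, a₁, a₂ ∈ L²(A, ν), h ∈ C_c¹((0,∞)) and ξ ∈ 2πℤ \ {0}. Then for all t > 0: |∫₀^∞ h(z) e^{iξzt} ∫_A a̅₁(x) a₂(T^{⌊zt⌋}x) dν(x) dz| ≤ 2 ‖a₁‖_{L²} ‖a₂‖_{L²} ‖h‖_{BV} / (|ξ| t), where ‖h‖_{BV} = ∫₀^∞ |h'(z)| dz. -/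
open MeasureTheory Filter Set
open scoped ENNReal Topology

/-!
Write `F(k) = ⟨a₁, a₂ ∘ T^k⟩`, so that `|F(k)| ≤ ‖a₁‖ ‖a₂‖` by Cauchy–Schwarz and invariance of `ν`,
and let `Ψ(u) = (e^{iξu} - 1)/(iξ)` be the primitive of `e^{iξu}` vanishing at `0`. Since
`ξ ∈ 2πℤ`, `Ψ` vanishes at every integer, so `z ↦ h(z) Ψ(zt) F(⌊zt⌋)` is continuous although
`F(⌊zt⌋)` jumps, and off the countable set `t⁻¹ℤ` its derivative is
`(h'(z) Ψ(zt) + t h(z) e^{iξzt}) F(⌊zt⌋)`. Integrating over `[0, R]` with `R` past the support of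
`h` (both boundary terms vanish) moves the oscillation onto `h'`, and `|Ψ| ≤ 2/|ξ|` finishes.
-/

theorem Int.floor_eventuallyEq {x : ℝ} (hx : ∀ n : ℤ, x ≠ n) : ∀ᶠ y in 𝓝 x, ⌊y⌋ = ⌊x⌋ :=
  eventually_of_mem (Ico_mem_nhds ((Int.floor_le x).lt_of_ne (hx _).symm) (Int.lt_floor_add_one x))
    (Int.floor_eq_on_Ico _)

theorem Int.floor_eventually_eq_sub_one_or_eq (n : ℤ) :
    ∀ᶠ y in 𝓝 (n : ℝ), ⌊y⌋ = n - 1 ∨ ⌊y⌋ = n := by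
  filter_upwards [Ioo_mem_nhds (sub_one_lt (n : ℝ)) (lt_add_one (n : ℝ))] with y ⟨hlo, hhi⟩
  have h₁ : n - 1 ≤ ⌊y⌋ := Int.le_floor.mpr (by push_cast; exact hlo.le)
  have h₂ : ⌊y⌋ < n + 1 := Int.floor_lt.mpr (by push_cast; exact hhi)
  omega

theorem continuous_mul_comp_floor {X : Type*} [TopologicalSpace X] {G : X → ℂ} {φ : X → ℝ}
    (hG : Continuous G) (hφ : Continuous φ)
    (hG0 : ∀ x, ∀ n : ℤ, φ x = n → G x = 0) (F : ℤ → ℂ) :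
    Continuous fun x => G x * F ⌊φ x⌋ := by
  refine continuous_iff_continuousAt.mpr fun x₀ => ?_
  by_cases hint : ∃ n : ℤ, φ x₀ = n
  · obtain ⟨n, hn⟩ := hint
    have hbound : ∀ᶠ x in 𝓝 x₀, ‖G x * F ⌊φ x⌋‖ ≤ ‖G x‖ * (‖F (n - 1)‖ + ‖F n‖) := by
      filter_upwards [hφ.continuousAt.eventually (hn ▸ Int.floor_eventually_eq_sub_one_or_eq n)]
        with x hx
      rw [norm_mul]
      gcongr
      rcases hx with hx | hx <;> rw [hx] <;> simp
    have hlim : Tendsto (fun x => ‖G x‖ * (‖F (n - 1)‖ + ‖F n‖)) (𝓝 x₀) (𝓝 0) := by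
      simpa [hG0 x₀ n hn] using (hG.norm.mul_const (‖F (n - 1)‖ + ‖F n‖)).tendsto x₀
    rw [ContinuousAt, hG0 x₀ n hn, zero_mul]
    exact squeeze_zero_norm' hbound hlim
  · push Not at hint
    have hev : (fun x => G x * F ⌊φ x⌋) =ᶠ[𝓝 x₀] fun x => G x * F ⌊φ x₀⌋ := by
      filter_upwards [hφ.continuousAt.eventually (Int.floor_eventuallyEq hint)] with x hx
      rw [hx]
    exact ((hG.mul continuous_const).continuousAt).congr hev.symm

theorem hasDerivAt_mul_comp_floor {G : ℝ → ℂ} {G' : ℂ} {φ : ℝ → ℝ} {x₀ : ℝ}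
    (hG : HasDerivAt G G' x₀) (hφ : ContinuousAt φ x₀) (hx₀ : ∀ n : ℤ, φ x₀ ≠ n) (F : ℤ → ℂ) :
    HasDerivAt (fun x => G x * F ⌊φ x⌋) (G' * F ⌊φ x₀⌋) x₀ := by
  refine (hG.mul_const (F ⌊φ x₀⌋)).congr_of_eventuallyEq ?_
  filter_upwards [hφ.eventually (Int.floor_eventuallyEq hx₀)] with x hx
  rw [hx]

noncomputable def expPrimitive (ξ u : ℝ) : ℂ :=
  (Complex.exp (Complex.I * ξ * u) - 1) / (Complex.I * ξ)

theorem expPrimitive_intCast {ξ : ℝ} (hξ : ∃ m : ℤ, ξ = 2 * Real.pi * m) (n : ℤ) :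
    expPrimitive ξ n = 0 := by
  obtain ⟨m, rfl⟩ := hξ
  have : Complex.I * (2 * Real.pi * m : ℝ) * ((n : ℝ) : ℂ) =
      (m * n : ℤ) * (2 * Real.pi * Complex.I) := by
    push_cast; ring
  rw [expPrimitive, this, Complex.exp_int_mul_two_pi_mul_I, sub_self, zero_div]

theorem norm_expPrimitive_le (ξ u : ℝ) : ‖expPrimitive ξ u‖ ≤ 2 / |ξ| := by
  have hexp : ‖Complex.exp (Complex.I * ξ * u)‖ = 1 := by
    rw [show Complex.I * ξ * u = (ξ * u : ℝ) * Complex.I by push_cast; ring]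
    exact Complex.norm_exp_ofReal_mul_I _
  rw [expPrimitive, norm_div, norm_mul, Complex.norm_I, one_mul, Complex.norm_real,
    Real.norm_eq_abs]
  gcongr
  calc ‖Complex.exp (Complex.I * ξ * u) - 1‖ ≤ ‖Complex.exp (Complex.I * ξ * u)‖ + ‖(1 : ℂ)‖ :=
        norm_sub_le _ _
    _ = 2 := by rw [hexp, norm_one]; norm_num

theorem hasDerivAt_expPrimitive {ξ : ℝ} (hξ : ξ ≠ 0) (u : ℝ) :
    HasDerivAt (expPrimitive ξ) (Complex.exp (Complex.I * ξ * u)) u := by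
  have hIξ : Complex.I * ξ ≠ 0 := mul_ne_zero Complex.I_ne_zero (Complex.ofReal_ne_zero.mpr hξ)
  have hlin : HasDerivAt (fun u : ℝ => Complex.I * ξ * u) (Complex.I * ξ) u := by
    simpa using (Complex.ofRealCLM.hasDerivAt (x := u)).const_mul (Complex.I * ξ)
  have := (hlin.cexp.sub_const 1).div_const (Complex.I * ξ)
  rwa [mul_div_cancel_right₀ _ hIξ] at this

@[fun_prop]
theorem continuous_expPrimitive (ξ : ℝ) : Continuous (expPrimitive ξ) := by
  unfold expPrimitive
  fun_prop

section Oscillatory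

variable {h : ℝ → ℝ} {ξ t C : ℝ} {F : ℤ → ℂ}

theorem intervalIntegrable_mul_comp_floor {f : ℝ → ℂ} (hf : Continuous f)
    (hF : ∀ n, ‖F n‖ ≤ C) (t a b : ℝ) :
    IntervalIntegrable (fun z => f z * F ⌊z * t⌋) volume a b := by
  have hm : Measurable fun z : ℝ => F ⌊z * t⌋ :=
    measurable_from_top.comp (measurable_id.mul_const t).floor
  exact intervalIntegrable_iff.mpr <|
    (intervalIntegrable_iff.mp (hf.intervalIntegrable a b)).mul_bdd hm.aestronglyMeasurable (ae_of_all _ fun z => hF _)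

theorem integral_mul_exp_mul_floor_eq (hh : ContDiff ℝ 1 h)
    (hξ : ∃ m : ℤ, m ≠ 0 ∧ ξ = 2 * Real.pi * m) (ht : t ≠ 0) (hF : ∀ n, ‖F n‖ ≤ C)
    {R : ℝ} (hR : 0 ≤ R) (hhR : h R = 0) :
    t * ∫ z in (0 : ℝ)..R, (h z : ℂ) * Complex.exp (Complex.I * ξ * z * t) * F ⌊z * t⌋ =
      -∫ z in (0 : ℝ)..R, ((deriv h z : ℝ) : ℂ) * expPrimitive ξ (z * t) * F ⌊z * t⌋ := by
  obtain ⟨m, hm, hξm⟩ := hξ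
  have hξ0 : ξ ≠ 0 := by simp [hξm, Real.pi_ne_zero, hm]
  have hΨ0 : ∀ n : ℤ, expPrimitive ξ n = 0 := expPrimitive_intCast ⟨m, hξm⟩
  have hh' : Continuous (deriv h) := hh.continuous_deriv le_rfl
  set G : ℝ → ℂ := fun z => (h z : ℂ) * expPrimitive ξ (z * t)
  set G' : ℝ → ℂ := fun z =>
    ((deriv h z : ℝ) : ℂ) * expPrimitive ξ (z * t) +
      t * ((h z : ℂ) * Complex.exp (Complex.I * ξ * z * t))
  have hG : ∀ z, HasDerivAt G (G' z) z := by
    intro z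
    have hΨ := (hasDerivAt_expPrimitive hξ0 (z * t)).scomp z (hasDerivAt_mul_const t)
    refine (((hh.differentiable one_ne_zero z).hasDerivAt.ofReal_comp).mul hΨ).congr_deriv ?_
    simp only [G', Function.comp_apply, Complex.real_smul, Complex.ofReal_mul, ← mul_assoc]
    ring
  have hG0 : ∀ z, ∀ n : ℤ, z * t = n → G z = 0 := by
    intro z n hn
    simp only [G, hn, hΨ0, mul_zero]
  have hS : {z : ℝ | ∃ n : ℤ, z * t = n}.Countable := by
    refine (countable_range fun n : ℤ => (n : ℝ) / t).mono ?_
    rintro z ⟨n, hn⟩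
    exact ⟨n, by simp only [← hn, mul_div_cancel_right₀ _ ht]⟩
  have hftc := integral_eq_of_hasDerivAt_off_countable_of_le (fun z => G z * F ⌊z * t⌋)
    (fun z => G' z * F ⌊z * t⌋) hR hS
    (continuous_mul_comp_floor (continuous_iff_continuousAt.mpr fun z => (hG z).continuousAt)
      (continuous_mul_const t) hG0 F).continuousOn
    (fun z hz => hasDerivAt_mul_comp_floor (hG z) (continuous_mul_const t).continuousAt
      (fun n hn => hz.2 ⟨n, hn⟩) F)
    (intervalIntegrable_mul_comp_floor (f := G') (by fun_prop) hF t 0 R)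
  have hGR : G R = 0 := by simp only [G, hhR, Complex.ofReal_zero, zero_mul]
  have hG00 : G 0 = 0 := hG0 0 0 (by simp)
  have hI₁ := intervalIntegrable_mul_comp_floor
    (f := fun z => ((deriv h z : ℝ) : ℂ) * expPrimitive ξ (z * t)) (by fun_prop) hF t 0 R
  have hI₂ := intervalIntegrable_mul_comp_floor
    (f := fun z => (h z : ℂ) * Complex.exp (Complex.I * ξ * z * t)) (by fun_prop) hF t 0 R
  rw [hGR, hG00, zero_mul, zero_mul, sub_zero] at hftc
  rw [← intervalIntegral.integral_const_mul, eq_neg_iff_add_eq_zero,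
    ← intervalIntegral.integral_add (hI₂.const_mul _) hI₁, ← hftc]
  congr 1 with z
  ring

theorem norm_integral_mul_exp_mul_floor_le (hh : ContDiff ℝ 1 h) (hsupp : HasCompactSupport h)
    (hξ : ∃ m : ℤ, m ≠ 0 ∧ ξ = 2 * Real.pi * m) (ht : 0 < t) (hF : ∀ n, ‖F n‖ ≤ C) :
    ‖∫ z in Ioi (0 : ℝ), (h z : ℂ) * Complex.exp (Complex.I * ξ * z * t) * F ⌊z * t⌋‖ ≤
      2 * C * (∫ z in Ioi (0 : ℝ), |deriv h z|) / (|ξ| * t) := by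
  obtain ⟨R, hR, hhR⟩ := hsupp.exists_pos_le_norm
  have hh' : Continuous (deriv h) := hh.continuous_deriv le_rfl
  have hIoi : ∫ z in Ioi (0 : ℝ), (h z : ℂ) * Complex.exp (Complex.I * ξ * z * t) * F ⌊z * t⌋ =
      ∫ z in (0 : ℝ)..R, (h z : ℂ) * Complex.exp (Complex.I * ξ * z * t) * F ⌊z * t⌋ := by
    rw [intervalIntegral.integral_of_le hR.le]
    refine setIntegral_eq_of_subset_of_forall_sdiff_eq_zero measurableSet_Ioi Ioc_subset_Ioi_self ?_
    rintro z ⟨hz0, hzR⟩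
    have hRz : R ≤ ‖z‖ := by
      rw [Real.norm_of_nonneg (le_of_lt hz0)]
      exact le_of_lt (not_le.mp fun h' => hzR ⟨hz0, h'⟩)
    simp [hhR z hRz]
  have hdh : ∫ z in (0 : ℝ)..R, |deriv h z| ≤ ∫ z in Ioi (0 : ℝ), |deriv h z| := by
    rw [intervalIntegral.integral_of_le hR.le]
    refine setIntegral_mono_set ?_ (ae_of_all _ fun z => abs_nonneg _)
      Ioc_subset_Ioi_self.eventuallyLE
    exact (hh'.abs.integrable_of_hasCompactSupport (hsupp.deriv.comp_left abs_zero)).integrableOn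
  have hC : 0 ≤ C := (norm_nonneg _).trans (hF 0)
  have hbound : t * ‖∫ z in (0 : ℝ)..R, (h z : ℂ) * Complex.exp (Complex.I * ξ * z * t) * F ⌊z * t⌋‖
      ≤ (∫ z in (0 : ℝ)..R, |deriv h z|) * (2 / |ξ| * C) := calc
    _ = ‖(t : ℂ) *
          ∫ z in (0 : ℝ)..R, (h z : ℂ) * Complex.exp (Complex.I * ξ * z * t) * F ⌊z * t⌋‖ := by
      rw [norm_mul, Complex.norm_of_nonneg ht.le]
    _ = ‖∫ z in (0 : ℝ)..R, ((deriv h z : ℝ) : ℂ) * expPrimitive ξ (z * t) * F ⌊z * t⌋‖ := by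
      rw [integral_mul_exp_mul_floor_eq hh hξ ht.ne' hF hR.le (hhR R (by simp [abs_of_pos hR])),
        norm_neg]
    _ ≤ ∫ z in (0 : ℝ)..R, |deriv h z| * (2 / |ξ| * C) := by
      refine intervalIntegral.norm_integral_le_of_norm_le hR.le (ae_of_all _ fun z _ => ?_)
        ((hh'.abs.intervalIntegrable 0 R).mul_const _)
      rw [norm_mul, norm_mul, Complex.norm_real, Real.norm_eq_abs, mul_assoc]
      gcongr
      exacts [norm_expPrimitive_le ξ _, hF _]
    _ = _ := intervalIntegral.integral_mul_const _ _
  have hξ0 : 0 < |ξ| := by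
    obtain ⟨m, hm, rfl⟩ := hξ
    simp [Real.pi_ne_zero, hm]
  rw [hIoi, le_div_iff₀ (by positivity)]
  calc _ = |ξ| * (t * ‖∫ z in (0 : ℝ)..R,
        (h z : ℂ) * Complex.exp (Complex.I * ξ * z * t) * F ⌊z * t⌋‖) := by ring
    _ ≤ |ξ| * ((∫ z in Ioi (0 : ℝ), |deriv h z|) * (2 / |ξ| * C)) := by
      refine mul_le_mul_of_nonneg_left (hbound.trans ?_) hξ0.le
      exact mul_le_mul_of_nonneg_right hdh (by positivity)
    _ = _ := by field_simp

end Oscillatory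

section L2

variable {A : Type*} [MeasurableSpace A] {ν : Measure A} {f g : A → ℂ}

theorem norm_integral_conj_mul_le (hf : MemLp f 2 ν) (hg : MemLp g 2 ν) :
    ‖∫ x, (starRingEnd ℂ) (f x) * g x ∂ν‖ ≤ (eLpNorm f 2 ν).toReal * (eLpNorm g 2 ν).toReal := by
  have hinner : ∫ x, (starRingEnd ℂ) (f x) * g x ∂ν = inner ℂ (hf.toLp f) (hg.toLp g) := by
    rw [L2.inner_def]
    refine integral_congr_ae ?_
    filter_upwards [hf.coeFn_toLp, hg.coeFn_toLp] with x hfx hgx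
    rw [hfx, hgx, RCLike.inner_apply, mul_comm]
  rw [hinner, ← Lp.norm_toLp f hf, ← Lp.norm_toLp g hg]
  exact norm_inner_le_norm _ _

theorem norm_integral_conj_mul_comp_le {T : A → A} (hT : MeasurePreserving T ν ν)
    (hf : MemLp f 2 ν) (hg : MemLp g 2 ν) :
    ‖∫ x, (starRingEnd ℂ) (f x) * g (T x) ∂ν‖ ≤
      (eLpNorm f 2 ν).toReal * (eLpNorm g 2 ν).toReal := by
  rw [← eLpNorm_comp_measurePreserving hg.aestronglyMeasurable hT]
  exact norm_integral_conj_mul_le hf (hg.comp_measurePreserving hT)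

end L2

theorem stmt17_general {A : Type*} [MeasurableSpace A] (ν : Measure A)
    (T : A → A) (hT : MeasurePreserving T ν ν)
    (a₁ a₂ : A → ℂ) (ha₁ : MemLp a₁ 2 ν) (ha₂ : MemLp a₂ 2 ν)
    (h : ℝ → ℝ) (hh : ContDiff ℝ 1 h) (hsupp : HasCompactSupport h)
    (ξ : ℝ) (hξ : ∃ m : ℤ, m ≠ 0 ∧ ξ = 2 * Real.pi * m)
    (t : ℝ) (ht : 0 < t) :
    ‖∫ z in Set.Ioi (0 : ℝ), (h z : ℂ) * Complex.exp (Complex.I * ξ * z * t) *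
        ∫ x, (starRingEnd ℂ) (a₁ x) * a₂ (T^[(⌊z * t⌋).toNat] x) ∂ν‖
    ≤ 2 * (eLpNorm a₁ 2 ν).toReal * (eLpNorm a₂ 2 ν).toReal *
        (∫ z in Set.Ioi (0 : ℝ), |deriv h z|) / (|ξ| * t) := by
  have hcorr (n : ℤ) :
      ‖∫ x, (starRingEnd ℂ) (a₁ x) * a₂ (T^[n.toNat] x) ∂ν‖ ≤
        (eLpNorm a₁ 2 ν).toReal * (eLpNorm a₂ 2 ν).toReal :=
    norm_integral_conj_mul_comp_le (hT.iterate _) ha₁ ha₂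
  simpa only [mul_assoc] using norm_integral_mul_exp_mul_floor_le hh hsupp hξ ht hcorr

/-- oscillatory estimate for fibered suspension flows. For a p.m.p. system
`(A, ν, T)`, `a₁, a₂ ∈ L²(ν)`, `h ∈ C_c¹((0,∞))` and `ξ ∈ 2πℤ \ {0}`, for all `t > 0`:
`|∫₀^∞ h(z) e^{iξzt} ∫_A a̅₁ a₂∘T^{⌊zt⌋} dν dz| ≤ 2 ‖a₁‖₂ ‖a₂‖₂ ‖h‖_BV / (|ξ| t)`,
where `‖h‖_BV = ∫₀^∞ |h'|`. -/
theorem stmt17 {A : Type*} [MeasurableSpace A] (ν : Measure A) [IsProbabilityMeasure ν]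
    (T : A → A) (hTm : Measurable T) (hT : MeasurePreserving T ν ν)
    (a₁ a₂ : A → ℂ) (ha₁ : MemLp a₁ 2 ν) (ha₂ : MemLp a₂ 2 ν)
    (h : ℝ → ℝ) (hh : ContDiff ℝ 1 h) (hsupp : HasCompactSupport h)
    (hpos : Function.support h ⊆ Set.Ioi (0 : ℝ))
    (ξ : ℝ) (hξ : ∃ m : ℤ, m ≠ 0 ∧ ξ = 2 * Real.pi * m)
    (t : ℝ) (ht : 0 < t) :
    ‖∫ z in Set.Ioi (0 : ℝ), (h z : ℂ) * Complex.exp (Complex.I * ξ * z * t) *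
        ∫ x, (starRingEnd ℂ) (a₁ x) * a₂ (T^[(⌊z * t⌋).toNat] x) ∂ν‖
    ≤ 2 * (eLpNorm a₁ 2 ν).toReal * (eLpNorm a₂ 2 ν).toReal *
        (∫ z in Set.Ioi (0 : ℝ), |deriv h z|) / (|ξ| * t) :=
  stmt17_general ν T hT a₁ a₂ ha₁ ha₂ h hh hsupp ξ hξ t ht
end
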